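/- Let Φ and φ denote the standard normal cumulative distribution function Φ(x) = ∫_{-∞}^{x} (1/√(2π)) e^{−u²/2} du and density φ(x) = (1/√(2π)) e^{−x²/2}. Then for every threshold τ ∈ ℝ and observation y ∈ ℝ, writing v = max(y, τ): twCRPS_τ(Φ, y) = −τ Φ(τ)² + v (2Φ(v) − 1) + 2 (φ(v) − φ(τ) Φ(τ)) − (1/√π) (1 − Φ(√2 · τ)). -/

import Mathlib

/-!
On `(τ, max y τ)` the integrand is `Φ²` and beyond it is `(1 - Φ)²`, and both have closed-form
primitives: since `φ' = -zφ` and `φ(√2 z) = √(2π) φ(z)²`, the function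
`z Φ² + 2φΦ - Φ(√2 z)/√π` has derivative `Φ²`, and `z (1 - Φ)² - 2φ (1 - Φ) - Φ(√2 z)/√π` has
derivative `(1 - Φ)²`. The latter tends to `-1/√π` at infinity thanks to the Mills-ratio bound
`z (1 - Φ z) ≤ φ z` for `z ≥ 0`.
-/

open MeasureTheory Set

/-- Threshold-weighted CRPS: `twCRPS_τ(F, y) = ∫_τ^∞ (F(z) − 𝟙{z ≥ y})² dz`. -/
noncomputable def twCRPS (F : ℝ → ℝ) (τ y : ℝ) : ℝ :=
  ∫ z in Set.Ioi τ, (F z - if y ≤ z then (1 : ℝ) else 0) ^ 2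

/-- Standard normal density `φ(x) = (1/√(2π)) e^{−x²/2}`. -/
noncomputable def stdNormalPDF (x : ℝ) : ℝ :=
  (Real.sqrt (2 * Real.pi))⁻¹ * Real.exp (-x ^ 2 / 2)

/-- Standard normal CDF `Φ(x) = ∫_{-∞}^x φ(u) du`. -/
noncomputable def stdNormalCDF (x : ℝ) : ℝ :=
  ∫ u in Set.Iic x, stdNormalPDF u

open Filter Topology Real

theorem twCRPS_eq_of_hasDerivAt {F G H : ℝ → ℝ} {L : ℝ}
    (hG : ∀ z, HasDerivAt G (F z ^ 2) z) (hH : ∀ z, HasDerivAt H ((1 - F z) ^ 2) z)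
    (hL : Tendsto H atTop (𝓝 L)) (τ y : ℝ) :
    twCRPS F τ y = G (max y τ) - G τ + (L - H (max y τ)) := by
  set v := max y τ
  have hτv : τ ≤ v := le_max_right y τ
  have below : EqOn (fun z => (F z - if y ≤ z then (1 : ℝ) else 0) ^ 2) (fun z => F z ^ 2)
      (Ioo τ v) := fun z hz => by
    have : ¬ y ≤ z := fun hyz => hz.2.not_ge (max_le hyz hz.1.le)
    simp only [this, if_false, sub_zero]
  have above : EqOn (fun z => (F z - if y ≤ z then (1 : ℝ) else 0) ^ 2) (fun z => (1 - F z) ^ 2)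
      (Ioi v) := fun z hz => by
    simp only [(le_max_left y τ).trans hz.le, if_true]
    ring
  have intBelow : IntegrableOn (fun z => F z ^ 2) (Ioc τ v) :=
    intervalIntegral.integrableOn_deriv_of_nonneg (continuous_iff_continuousAt.2
      fun z => (hG z).continuousAt).continuousOn (fun z _ => hG z) fun _ _ => sq_nonneg _
  have intAbove : IntegrableOn (fun z => (1 - F z) ^ 2) (Ioi v) :=
    integrableOn_Ioi_deriv_of_nonneg' (fun z _ => hH z) (fun _ _ => sq_nonneg _) hL
  calc twCRPS F τ y
      = (∫ z in Ioc τ v, (F z - if y ≤ z then (1 : ℝ) else 0) ^ 2)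
          + ∫ z in Ioi v, (F z - if y ≤ z then (1 : ℝ) else 0) ^ 2 := by
        rw [twCRPS, ← Ioc_union_Ioi_eq_Ioi hτv]
        refine setIntegral_union Ioc_disjoint_Ioi_same measurableSet_Ioi ?_
          (intAbove.congr_fun above.symm measurableSet_Ioi)
        exact (integrableOn_Ioc_iff_integrableOn_Ioo (by simp)).2
          ((intBelow.mono_set Ioo_subset_Ioc_self).congr_fun below.symm measurableSet_Ioo)
    _ = (∫ z in τ..v, F z ^ 2) + ∫ z in Ioi v, (1 - F z) ^ 2 := by
        rw [intervalIntegral.integral_of_le hτv, integral_Ioc_eq_integral_Ioo,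
          integral_Ioc_eq_integral_Ioo, setIntegral_congr_fun measurableSet_Ioo below,
          setIntegral_congr_fun measurableSet_Ioi above]
    _ = G v - G τ + (L - H v) := by
        rw [intervalIntegral.integral_eq_sub_of_hasDerivAt (fun z _ => hG z)
            ((intervalIntegrable_iff_integrableOn_Ioc_of_le hτv).2 intBelow),
          integral_Ioi_of_hasDerivAt_of_nonneg' (fun z _ => hH z) (fun _ _ => sq_nonneg _) hL]

lemma stdNormalPDF_eq_gaussianPDFReal : stdNormalPDF = ProbabilityTheory.gaussianPDFReal 0 1 := by
  ext x
  simp [stdNormalPDF, ProbabilityTheory.gaussianPDFReal]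

lemma stdNormalPDF_nonneg (x : ℝ) : 0 ≤ stdNormalPDF x := by
  unfold stdNormalPDF; positivity

lemma integrable_stdNormalPDF : Integrable stdNormalPDF := by
  rw [stdNormalPDF_eq_gaussianPDFReal]
  exact ProbabilityTheory.integrable_gaussianPDFReal 0 1

lemma integral_stdNormalPDF : ∫ x, stdNormalPDF x = 1 := by
  rw [stdNormalPDF_eq_gaussianPDFReal]
  exact ProbabilityTheory.integral_gaussianPDFReal_eq_one 0 one_ne_zero

lemma hasDerivAt_stdNormalPDF (x : ℝ) : HasDerivAt stdNormalPDF (-x * stdNormalPDF x) x := by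
  refine ((((hasDerivAt_pow 2 x).fun_neg.div_const 2).exp).const_mul (√(2 * π))⁻¹).congr_deriv ?_
  simp only [stdNormalPDF]
  ring

lemma continuous_stdNormalPDF : Continuous stdNormalPDF :=
  continuous_iff_continuousAt.2 fun x => (hasDerivAt_stdNormalPDF x).continuousAt

lemma tendsto_stdNormalPDF_atTop : Tendsto stdNormalPDF atTop (𝓝 0) := by
  have h : Tendsto (fun x : ℝ => -x ^ 2 / 2) atTop atBot :=
    (tendsto_neg_atBot_iff.2 (tendsto_pow_atTop two_ne_zero)).atBot_div_const two_pos
  unfold stdNormalPDF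
  simpa only [Function.comp_def, mul_zero] using (tendsto_exp_atBot.comp h).const_mul (√(2 * π))⁻¹

lemma stdNormalPDF_sqrt_two_mul (x : ℝ) :
    stdNormalPDF (√2 * x) = √(2 * π) * stdNormalPDF x ^ 2 := by
  simp only [stdNormalPDF, mul_pow, sq_sqrt zero_le_two, inv_pow, ← exp_nat_mul]
  field_simp
  ring_nf

lemma one_sub_stdNormalCDF (x : ℝ) : 1 - stdNormalCDF x = ∫ u in Ioi x, stdNormalPDF u := by
  rw [← integral_stdNormalPDF, ← integral_add_compl measurableSet_Iic integrable_stdNormalPDF,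
    compl_Iic, stdNormalCDF, add_sub_cancel_left]

lemma stdNormalCDF_nonneg (x : ℝ) : 0 ≤ stdNormalCDF x :=
  setIntegral_nonneg measurableSet_Iic fun u _ => stdNormalPDF_nonneg u

lemma stdNormalCDF_le_one (x : ℝ) : stdNormalCDF x ≤ 1 := by
  have : 0 ≤ ∫ u in Ioi x, stdNormalPDF u :=
    setIntegral_nonneg measurableSet_Ioi fun u _ => stdNormalPDF_nonneg u
  linarith [one_sub_stdNormalCDF x]

lemma hasDerivAt_stdNormalCDF (x : ℝ) : HasDerivAt stdNormalCDF (stdNormalPDF x) x := by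
  have h : stdNormalCDF = fun t => stdNormalCDF 0 + ∫ u in (0 : ℝ)..t, stdNormalPDF u := by
    ext t
    rw [← intervalIntegral.integral_Iic_sub_Iic integrable_stdNormalPDF.integrableOn
      integrable_stdNormalPDF.integrableOn, stdNormalCDF, stdNormalCDF, add_sub_cancel]
  rw [h]
  exact (intervalIntegral.integral_hasDerivAt_right integrable_stdNormalPDF.intervalIntegrable
    (continuous_stdNormalPDF.stronglyMeasurableAtFilter _ _)
    continuous_stdNormalPDF.continuousAt).const_add _

lemma tendsto_stdNormalCDF_atTop : Tendsto stdNormalCDF atTop (𝓝 1) := by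
  have h := tendsto_integral_Ioi_zero (f := stdNormalPDF) (μ := volume) tendsto_id
  simp only [id, ← one_sub_stdNormalCDF] at h
  simpa using h.const_sub 1

lemma mul_one_sub_stdNormalCDF_le {x : ℝ} (hx : 0 ≤ x) :
    x * (1 - stdNormalCDF x) ≤ stdNormalPDF x := by
  have hderiv : ∀ u ∈ Ici x, HasDerivAt (fun u => -stdNormalPDF u) (u * stdNormalPDF u) u :=
    fun u _ => by simpa using (hasDerivAt_stdNormalPDF u).fun_neg
  have hnonneg : ∀ u ∈ Ioi x, 0 ≤ u * stdNormalPDF u :=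
    fun u hu => mul_nonneg (hx.trans hu.le) (stdNormalPDF_nonneg u)
  have hlim : Tendsto (fun u => -stdNormalPDF u) atTop (𝓝 0) := by
    simpa using tendsto_stdNormalPDF_atTop.neg
  calc x * (1 - stdNormalCDF x) = ∫ u in Ioi x, x * stdNormalPDF u := by
        rw [one_sub_stdNormalCDF, integral_const_mul]
    _ ≤ ∫ u in Ioi x, u * stdNormalPDF u :=
        setIntegral_mono_on (integrable_stdNormalPDF.integrableOn.const_mul x)
          (integrableOn_Ioi_deriv_of_nonneg' hderiv hnonneg hlim) measurableSet_Ioi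
          fun u hu => mul_le_mul_of_nonneg_right hu.le (stdNormalPDF_nonneg u)
    _ = stdNormalPDF x := by
        rw [integral_Ioi_of_hasDerivAt_of_nonneg' hderiv hnonneg hlim]; ring

lemma tendsto_mul_one_sub_stdNormalCDF_sq_atTop :
    Tendsto (fun x => x * (1 - stdNormalCDF x) ^ 2) atTop (𝓝 0) := by
  refine squeeze_zero' (eventually_atTop.2 ⟨0, fun x hx => by positivity⟩)
    (eventually_atTop.2 ⟨0, fun x hx => ?_⟩) tendsto_stdNormalPDF_atTop
  have h0 : 0 ≤ 1 - stdNormalCDF x := sub_nonneg.2 (stdNormalCDF_le_one x)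
  have h1 : 1 - stdNormalCDF x ≤ 1 := sub_le_self _ (stdNormalCDF_nonneg x)
  calc x * (1 - stdNormalCDF x) ^ 2 = x * (1 - stdNormalCDF x) * (1 - stdNormalCDF x) := by ring
    _ ≤ stdNormalPDF x * 1 :=
        mul_le_mul (mul_one_sub_stdNormalCDF_le hx) h1 h0 (stdNormalPDF_nonneg x)
    _ = stdNormalPDF x := mul_one _

lemma hasDerivAt_stdNormalCDF_sqrt_two_mul (z : ℝ) :
    HasDerivAt (fun z => (√π)⁻¹ * stdNormalCDF (√2 * z)) (2 * stdNormalPDF z ^ 2) z := by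
  have h := ((hasDerivAt_stdNormalCDF (√2 * z)).comp z
    ((hasDerivAt_id z).const_mul √2)).const_mul (√π)⁻¹
  refine h.congr_deriv ?_
  rw [stdNormalPDF_sqrt_two_mul, sqrt_mul zero_le_two]
  field_simp
  rw [sq_sqrt zero_le_two]
  ring

noncomputable def stdNormalCDFSqPrimitive (z : ℝ) : ℝ :=
  z * stdNormalCDF z ^ 2 + 2 * stdNormalPDF z * stdNormalCDF z
    - (√π)⁻¹ * stdNormalCDF (√2 * z)

noncomputable def stdNormalTailSqPrimitive (z : ℝ) : ℝ :=
  z * (1 - stdNormalCDF z) ^ 2 - 2 * stdNormalPDF z * (1 - stdNormalCDF z)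
    - (√π)⁻¹ * stdNormalCDF (√2 * z)

lemma hasDerivAt_stdNormalCDFSqPrimitive (z : ℝ) :
    HasDerivAt stdNormalCDFSqPrimitive (stdNormalCDF z ^ 2) z := by
  have hΦ := hasDerivAt_stdNormalCDF z
  have h := (((hasDerivAt_id z).mul (hΦ.pow 2)).add (((hasDerivAt_stdNormalPDF z).const_mul 2).mul
    hΦ)).sub (hasDerivAt_stdNormalCDF_sqrt_two_mul z)
  refine h.congr_deriv ?_
  simp only [id_eq, Pi.pow_apply]
  push_cast
  ring

lemma hasDerivAt_stdNormalTailSqPrimitive (z : ℝ) :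
    HasDerivAt stdNormalTailSqPrimitive ((1 - stdNormalCDF z) ^ 2) z := by
  have hΦ := (hasDerivAt_stdNormalCDF z).const_sub 1
  have h := (((hasDerivAt_id z).mul (hΦ.pow 2)).sub (((hasDerivAt_stdNormalPDF z).const_mul 2).mul
    hΦ)).sub (hasDerivAt_stdNormalCDF_sqrt_two_mul z)
  refine h.congr_deriv ?_
  simp only [id_eq, Pi.pow_apply]
  push_cast
  ring

lemma tendsto_stdNormalTailSqPrimitive_atTop :
    Tendsto stdNormalTailSqPrimitive atTop (𝓝 (-(√π)⁻¹)) := by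
  have hPDF := (tendsto_stdNormalPDF_atTop.const_mul 2).mul
    (tendsto_stdNormalCDF_atTop.const_sub 1)
  have hCDF := (tendsto_stdNormalCDF_atTop.comp
    (tendsto_id.const_mul_atTop (sqrt_pos.2 zero_lt_two))).const_mul (√π)⁻¹
  unfold stdNormalTailSqPrimitive
  simpa using (tendsto_mul_one_sub_stdNormalCDF_sq_atTop.sub hPDF).sub hCDF

theorem twCRPS_stdNormal (τ y : ℝ) :
    twCRPS stdNormalCDF τ y =
      -τ * (stdNormalCDF τ) ^ 2
        + max y τ * (2 * stdNormalCDF (max y τ) - 1)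
        + 2 * (stdNormalPDF (max y τ) - stdNormalPDF τ * stdNormalCDF τ)
        - (Real.sqrt Real.pi)⁻¹ * (1 - stdNormalCDF (Real.sqrt 2 * τ)) := by
  rw [twCRPS_eq_of_hasDerivAt hasDerivAt_stdNormalCDFSqPrimitive
    hasDerivAt_stdNormalTailSqPrimitive tendsto_stdNormalTailSqPrimitive_atTop,
    stdNormalCDFSqPrimitive, stdNormalCDFSqPrimitive, stdNormalTailSqPrimitive]
  ring
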